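/- arXiv:2402.11280 — 3 statements merged into one kernel-verified Lean document; each statement's English description precedes it below -/
import Mathlib

section
/- Under Assumption A, there exist τ₀ > 0 and Q > 0, depending only on d, k, L, β, γ, ‖x₀‖ and T, such that for every N ∈ ℕ with τ = T/N ≤ τ₀, the iterates of the discrete HiSD scheme satisfy ‖(v_{i,n} − v_{i,n−1})/τ − R_i^{n−1} − L_i^{n−1}‖ ≤ Q τ for all 1 ≤ i ≤ k and 1 ≤ n ≤ N; that is, combining the Rayleigh-quotient step and the Gram–Schmidt step recovers, up to an O(τ) error, the explicit Euler discretization of the directional-vector dynamics dv_i/dt = R_i + L_i of the continuous HiSD. -/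
/-!
Write `H = τγ J(xₙ)`, `vᵢ = v_{i,n}`, `v'ᵢ = v_{i,n+1}`, so that `ṽᵢ = vᵢ + H vᵢ`.
Inductively in `i`, the Gram–Schmidt coefficients are
`⟪ṽᵢ, v'ⱼ⟫ = ⟪vᵢ, H vⱼ⟫ + ⟪H vᵢ, vⱼ⟫ + O(‖H‖²) = 2 ⟪vⱼ, H vᵢ⟫ + O(‖H‖²)`,
the last step by symmetry of `H`; and normalising a vector `w` close to a unit vector `u` gives
`w - ⟪u, w - u⟫ u` up to `O(‖w - u‖²)`. Together, `v'ᵢ = vᵢ + τ (Rᵢ + Lᵢ) + O(‖H‖²)`.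
Finally `‖H‖ = O(τ)` uniformly in `n`: the position update has norm at most
`3βτ‖F(xₙ)‖ ≤ 3βLτ (1 + ‖xₙ‖)`, so by the discrete Grönwall inequality
`1 + ‖xₙ‖ ≤ (1 + ‖x₀‖) e^{3βLT}`, and `J` is Lipschitz.
-/

open Finset
open scoped RealInnerProductSpace

variable {E : Type*} [NormedAddCommGroup E] [InnerProductSpace ℝ E]

theorem Orthonormal.norm_sum_inner_smul_le {ι : Type*} {v : ι → E} (hv : Orthonormal ℝ v)
    (s : Finset ι) (y : E) : ‖∑ j ∈ s, ⟪v j, y⟫ • v j‖ ≤ ‖y‖ := by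
  refine le_of_sq_le_sq ?_ (norm_nonneg y)
  calc ‖∑ j ∈ s, ⟪v j, y⟫ • v j‖ ^ 2 = ∑ j ∈ s, ‖⟪v j, y⟫‖ ^ 2 := by
        rw [← real_inner_self_eq_norm_sq, hv.inner_sum]
        simp [sq]
    _ ≤ ‖y‖ ^ 2 := hv.sum_inner_products_le y

variable {k : ℕ}

def IsGramSchmidt (v u : Fin k → E) : Prop :=
  ∀ i, let w := v i - ∑ j ∈ Iio i, ⟪v i, u j⟫ • u j
    w ≠ 0 ∧ u i = ‖w‖⁻¹ • w

namespace IsGramSchmidt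

variable {v u : Fin k → E}

theorem norm_eq_one (h : IsGramSchmidt v u) (i : Fin k) : ‖u i‖ = 1 := by
  obtain ⟨hw, hu⟩ := h i
  rw [hu, norm_smul, norm_inv, norm_norm, inv_mul_cancel₀ (norm_ne_zero_iff.mpr hw)]

theorem orthonormal (h : IsGramSchmidt v u) : Orthonormal ℝ u := by
  have key : ∀ i j, j < i → ⟪u i, u j⟫ = 0 := by
    intro i
    induction i using WellFoundedLT.induction with
    | _ i ih =>
      intro j hji
      have hproj : ∀ l ∈ Iio i, ⟪⟪v i, u l⟫ • u l, u j⟫ = if l = j then ⟪v i, u j⟫ else 0 := by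
        intro l hl
        rw [real_inner_smul_left]
        rcases lt_trichotomy l j with hlj | rfl | hjl
        · rw [real_inner_comm (u j), ih j hji l hlj, if_neg hlj.ne, mul_zero]
        · rw [if_pos rfl, real_inner_self_eq_norm_sq, h.norm_eq_one, one_pow, mul_one]
        · rw [ih l (mem_Iio.mp hl) j hjl, if_neg hjl.ne', mul_zero]
      rw [(h i).2, real_inner_smul_left, inner_sub_left, sum_inner, sum_congr rfl hproj,
        sum_ite_eq' _ _ _, if_pos (mem_Iio.mpr hji), sub_self, mul_zero]
  refine ⟨h.norm_eq_one, fun i j hij => ?_⟩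
  rcases hij.lt_or_gt with hij | hji
  · rw [real_inner_comm, key j i hij]
  · exact key i j hji

end IsGramSchmidt

theorem abs_norm_sub_one_sub_inner_le {u w : E} (hu : ‖u‖ = 1) (hw : ‖w - u‖ ≤ 1 / 2) :
    |‖w‖ - 1 - ⟪u, w - u⟫| ≤ ‖w - u‖ ^ 2 := by
  have hs := abs_le.mp <| show |⟪u, w - u⟫| ≤ ‖w - u‖ by
    simpa [hu] using abs_real_inner_le_norm u (w - u)
  have hn : 1 / 2 ≤ ‖w‖ := by linarith [(abs_le.mp (hu ▸ abs_norm_sub_norm_le w u)).1]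
  have hn_sq := norm_add_sq_real u (w - u)
  rw [add_sub_cancel, hu] at hn_sq
  -- `(‖w‖ - 1 - s) * (‖w‖ + 1 + s) = ‖w - u‖² - s²` with `s = ⟪u, w - u⟫`, and `‖w‖ + 1 + s ≥ 1`
  have hprod : (‖w‖ - 1 - ⟪u, w - u⟫) * (‖w‖ + 1 + ⟪u, w - u⟫) = ‖w - u‖ ^ 2 - ⟪u, w - u⟫ ^ 2 := by
    linear_combination hn_sq
  have hnonneg : 0 ≤ ‖w‖ - 1 - ⟪u, w - u⟫ := by nlinarith [sq_le_sq' hs.1 hs.2]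
  rw [abs_of_nonneg hnonneg]
  nlinarith [sq_nonneg ⟪u, w - u⟫]

/-- First-order expansion of `w ↦ ‖w‖⁻¹ • w` at a unit vector `u`. -/
theorem norm_inv_smul_sub_le {u w : E} (hu : ‖u‖ = 1) (hw : ‖w - u‖ ≤ 1 / 2) :
    ‖‖w‖⁻¹ • w - (w - ⟪u, w - u⟫ • u)‖ ≤ 6 * ‖w - u‖ ^ 2 := by
  have hns := abs_norm_sub_one_sub_inner_le hu hw
  set t := ‖w - u‖
  set s := ⟪u, w - u⟫
  have hs : |s| ≤ t := by simpa [hu] using abs_real_inner_le_norm u (w - u)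
  have hn1 : |‖w‖ - 1| ≤ t := hu ▸ abs_norm_sub_norm_le w u
  have hn : 1 / 2 ≤ ‖w‖ := by linarith [(abs_le.mp hn1).1]
  have hinv : ‖w‖⁻¹ ≤ 2 := by
    rw [show (2 : ℝ) = (1 / 2)⁻¹ by norm_num]; exact inv_anti₀ (by norm_num) hn
  have hc₁ : |‖w‖⁻¹ - 1 + s| ≤ 4 * t ^ 2 := by
    have : ‖w‖⁻¹ - 1 + s = ‖w‖⁻¹ * (s * (‖w‖ - 1) - (‖w‖ - 1 - s)) := by
      field_simp; ring
    rw [this, abs_mul, abs_inv, abs_norm]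
    calc ‖w‖⁻¹ * _ ≤ 2 * (|s| * |‖w‖ - 1| + |‖w‖ - 1 - s|) := by
          gcongr; rw [← abs_mul]; exact abs_sub _ _
      _ ≤ 2 * (t * t + t ^ 2) := by gcongr
      _ = 4 * t ^ 2 := by ring
  have hc₂ : |‖w‖⁻¹ - 1| ≤ 2 * t := by
    have : ‖w‖⁻¹ - 1 = ‖w‖⁻¹ * -(‖w‖ - 1) := by field_simp; ring
    rw [this, abs_mul, abs_neg, abs_inv, abs_norm]
    gcongr
  calc ‖‖w‖⁻¹ • w - (w - s • u)‖
      = ‖(‖w‖⁻¹ - 1 + s) • u + (‖w‖⁻¹ - 1) • (w - u)‖ := by congr 1; module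
    _ ≤ |‖w‖⁻¹ - 1 + s| + |‖w‖⁻¹ - 1| * t := by
        refine (norm_add_le _ _).trans ?_
        rw [norm_smul, norm_smul, hu, mul_one, Real.norm_eq_abs, Real.norm_eq_abs]
    _ ≤ 4 * t ^ 2 + 2 * t * t := by gcongr
    _ = 6 * t ^ 2 := by ring

theorem Orthonormal.norm_apply_le {ι : Type*} {u : ι → E} (hu : Orthonormal ℝ u)
    (H : E →L[ℝ] E) (i : ι) : ‖H (u i)‖ ≤ ‖H‖ :=
  H.le_of_opNorm_le le_rfl (u i) |>.trans_eq (by rw [hu.norm_eq_one, mul_one])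

theorem Orthonormal.abs_inner_apply_le {ι : Type*} {u : ι → E} (hu : Orthonormal ℝ u)
    (H : E →L[ℝ] E) (i j : ι) : |⟪u j, H (u i)⟫| ≤ ‖H‖ :=
  (abs_real_inner_le_norm _ _).trans (by rw [hu.norm_eq_one, one_mul]; exact hu.norm_apply_le H i)

variable {u : Fin k → E} {H : E →L[ℝ] E}

/-- With `H = (τ * γ) • J x`, this is `τ (Rᵢ + Lᵢ)` in the notation of the paper. -/
noncomputable def gsFirstOrder (H : E →L[ℝ] E) (u : Fin k → E) (i : Fin k) : E :=
  H (u i) - ⟪u i, H (u i)⟫ • u i - (2 : ℝ) • ∑ j ∈ Iio i, ⟪u j, H (u i)⟫ • u j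

theorem gsFirstOrder_smul (a : ℝ) (H : E →L[ℝ] E) (u : Fin k → E) (i : Fin k) :
    gsFirstOrder (a • H) u i = a • gsFirstOrder H u i := by
  simp only [gsFirstOrder, smul_apply, real_inner_smul_right, smul_sum, smul_smul, smul_sub,
    mul_left_comm a]

theorem Orthonormal.inner_sum_Iio_eq_zero (hu : Orthonormal ℝ u) {i j : Fin k} (hij : j ≤ i)
    (c : Fin k → ℝ) : ⟪u i, ∑ l ∈ Iio j, c l • u l⟫ = 0 := by
  rw [inner_sum]
  refine sum_eq_zero fun l hl => ?_
  rw [real_inner_smul_right, hu.inner_eq_zero ((mem_Iio.mp hl).trans_le hij).ne', mul_zero]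

theorem norm_gsFirstOrder_le (hu : Orthonormal ℝ u) (i : Fin k) :
    ‖gsFirstOrder H u i‖ ≤ 4 * ‖H‖ := by
  have hcoef : ‖⟪u i, H (u i)⟫ • u i‖ ≤ ‖H‖ := by
    rw [norm_smul, hu.norm_eq_one, mul_one, Real.norm_eq_abs]
    exact hu.abs_inner_apply_le H i i
  have hsum : ‖(2 : ℝ) • ∑ j ∈ Iio i, ⟪u j, H (u i)⟫ • u j‖ ≤ 2 * ‖H‖ := by
    rw [norm_smul, Real.norm_two]
    gcongr
    exact (hu.norm_sum_inner_smul_le _ _).trans (hu.norm_apply_le H i)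
  have hHu := hu.norm_apply_le H i
  calc ‖gsFirstOrder H u i‖
      ≤ ‖H (u i)‖ + ‖⟪u i, H (u i)⟫ • u i‖ + ‖(2 : ℝ) • ∑ j ∈ Iio i, ⟪u j, H (u i)⟫ • u j‖ :=
        norm_sub_le_of_le (norm_sub_le _ _) le_rfl
    _ ≤ 4 * ‖H‖ := by linarith

theorem inner_gsFirstOrder_self (hu : Orthonormal ℝ u) (i : Fin k) :
    ⟪u i, gsFirstOrder H u i⟫ = 0 := by
  rw [gsFirstOrder, inner_sub_right, inner_sub_right, real_inner_smul_right,
    real_inner_smul_right, hu.inner_sum_Iio_eq_zero le_rfl, real_inner_self_eq_norm_sq,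
    hu.norm_eq_one]
  ring

theorem inner_gsFirstOrder_of_lt (hu : Orthonormal ℝ u) (hH : (H : E →ₗ[ℝ] E).IsSymmetric)
    {i j : Fin k} (hji : j < i) : ⟪u i, gsFirstOrder H u j⟫ = ⟪u j, H (u i)⟫ := by
  rw [gsFirstOrder, inner_sub_right, inner_sub_right, real_inner_smul_right,
    real_inner_smul_right, hu.inner_sum_Iio_eq_zero hji.le, hu.inner_eq_zero hji.ne',
    real_inner_comm]
  simpa using hH (u j) (u i)

variable {ε c : ℝ}

theorem norm_inner_smul_sub_two_inner_smul_le (hu : Orthonormal ℝ u)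
    (hH : (H : E →ₗ[ℝ] E).IsSymmetric) (hHε : ‖H‖ ≤ ε) (hε : ε ≤ 1) (hc : 0 ≤ c)
    {i j : Fin k} (hji : j < i) {y : E} (hy : ‖y‖ = 1)
    (hyc : ‖y - u j - gsFirstOrder H u j‖ ≤ c * ε ^ 2) :
    ‖⟪u i + H (u i), y⟫ • y - (2 * ⟪u j, H (u i)⟫) • u j‖ ≤ (4 * c + 12) * ε ^ 2 := by
  set e := y - u j - gsFirstOrder H u j
  have hε0 : 0 ≤ ε := (norm_nonneg H).trans hHε
  have hHu : ‖H (u i)‖ ≤ ε := (hu.norm_apply_le H i).trans hHε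
  have hyu : ‖y - u j‖ ≤ (4 + c) * ε := by
    have hG := (norm_gsFirstOrder_le hu j (H := H)).trans (by gcongr : 4 * ‖H‖ ≤ 4 * ε)
    calc ‖y - u j‖ = ‖gsFirstOrder H u j + e‖ := by congr 1; simp only [e]; abel
      _ ≤ 4 * ε + c * ε ^ 2 := norm_add_le_of_le hG hyc
      _ ≤ (4 + c) * ε := by nlinarith [mul_nonneg (mul_nonneg hc hε0) (sub_nonneg.mpr hε)]
  -- `⟪u i, H (u j)⟫ = ⟪H (u i), u j⟫` by symmetry, whence the factor 2
  have hcoef : ⟪u i + H (u i), y⟫ - 2 * ⟪u j, H (u i)⟫ = ⟪u i, e⟫ + ⟪H (u i), y - u j⟫ := by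
    have h₁ : ⟪u i, y⟫ = ⟪u i, u j⟫ + ⟪u i, gsFirstOrder H u j⟫ + ⟪u i, e⟫ := by
      rw [← inner_add_right, ← inner_add_right]; congr 1; simp only [e]; abel
    have h₂ : ⟪H (u i), y⟫ = ⟪H (u i), u j⟫ + ⟪H (u i), y - u j⟫ := by
      rw [← inner_add_right, add_sub_cancel]
    rw [inner_add_left, h₁, h₂, hu.inner_eq_zero hji.ne', inner_gsFirstOrder_of_lt hu hH hji,
      real_inner_comm (u j)]
    ring
  have hcoef_le : |⟪u i + H (u i), y⟫ - 2 * ⟪u j, H (u i)⟫| ≤ (2 * c + 4) * ε ^ 2 := by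
    rw [hcoef]
    calc _ ≤ ‖u i‖ * ‖e‖ + ‖H (u i)‖ * ‖y - u j‖ :=
          (abs_add_le _ _).trans (add_le_add (abs_real_inner_le_norm _ _)
            (abs_real_inner_le_norm _ _))
      _ ≤ 1 * (c * ε ^ 2) + ε * ((4 + c) * ε) := by
          rw [hu.norm_eq_one]; gcongr
      _ = (2 * c + 4) * ε ^ 2 := by ring
  have hproj_le : |2 * ⟪u j, H (u i)⟫| ≤ 2 * ε := by
    rw [abs_mul, abs_two]
    gcongr
    exact (hu.abs_inner_apply_le H i j).trans hHε
  calc _ = ‖(⟪u i + H (u i), y⟫ - 2 * ⟪u j, H (u i)⟫) • y +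
        (2 * ⟪u j, H (u i)⟫) • (y - u j)‖ := by
        congr 1; module
    _ ≤ |⟪u i + H (u i), y⟫ - 2 * ⟪u j, H (u i)⟫| * 1 +
        |2 * ⟪u j, H (u i)⟫| * ‖y - u j‖ := by
        refine (norm_add_le _ _).trans_eq ?_
        rw [norm_smul, norm_smul, hy, Real.norm_eq_abs, Real.norm_eq_abs]
    _ ≤ (2 * c + 4) * ε ^ 2 * 1 + 2 * ε * ((4 + c) * ε) := by gcongr
    _ = (4 * c + 12) * ε ^ 2 := by ring

theorem norm_sum_inner_smul_sub_two_smul_sum_le {u' : Fin k → E} (hu : Orthonormal ℝ u)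
    (hH : (H : E →ₗ[ℝ] E).IsSymmetric) (hHε : ‖H‖ ≤ ε) (hε : ε ≤ 1) (hc : 0 ≤ c)
    (hu' : ∀ j, ‖u' j‖ = 1) (i : Fin k)
    (hprev : ∀ j < i, ‖u' j - u j - gsFirstOrder H u j‖ ≤ c * ε ^ 2) :
    ‖∑ j ∈ Iio i, ⟪u i + H (u i), u' j⟫ • u' j - (2 : ℝ) • ∑ j ∈ Iio i, ⟪u j, H (u i)⟫ • u j‖ ≤
      k * (4 * c + 12) * ε ^ 2 := by
  rw [smul_sum, ← sum_sub_distrib]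
  calc _ ≤ ∑ j ∈ Iio i, (4 * c + 12) * ε ^ 2 := by
        refine norm_sum_le_of_le _ fun j hj => ?_
        rw [smul_smul]
        exact norm_inner_smul_sub_two_inner_smul_le hu hH hHε hε hc (mem_Iio.mp hj) (hu' j)
          (hprev j (mem_Iio.mp hj))
    _ ≤ k * ((4 * c + 12) * ε ^ 2) := by
        rw [sum_const, Fin.card_Iio, nsmul_eq_mul]
        gcongr
        exact_mod_cast i.is_lt.le
    _ = k * (4 * c + 12) * ε ^ 2 := by ring

theorem norm_gramSchmidt_sub_gsFirstOrder_le_of_forall_lt {u' : Fin k → E}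
    (hu : Orthonormal ℝ u) (hH : (H : E →ₗ[ℝ] E).IsSymmetric) (hHε : ‖H‖ ≤ ε)
    (hGS : IsGramSchmidt (fun i => u i + H (u i)) u') (hc : 0 ≤ c)
    (hsmall : (5 + k * (4 * c + 12)) * ε ≤ 1 / 2) (i : Fin k)
    (hprev : ∀ j < i, ‖u' j - u j - gsFirstOrder H u j‖ ≤ c * ε ^ 2) :
    ‖u' i - u i - gsFirstOrder H u i‖ ≤
      (6 * (5 + k * (4 * c + 12)) ^ 2 + 2 * (k * (4 * c + 12))) * ε ^ 2 := by
  set m : ℝ := 5 + k * (4 * c + 12)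
  have hε0 : 0 ≤ ε := (norm_nonneg H).trans hHε
  have hk : 0 ≤ k * (4 * c + 12) := by positivity
  have hε1 : ε ≤ 1 := by nlinarith
  set w := u i + H (u i) - ∑ j ∈ Iio i, ⟪u i + H (u i), u' j⟫ • u' j
  set r := ∑ j ∈ Iio i, ⟪u i + H (u i), u' j⟫ • u' j -
    (2 : ℝ) • ∑ j ∈ Iio i, ⟪u j, H (u i)⟫ • u j
  have hr : ‖r‖ ≤ k * (4 * c + 12) * ε ^ 2 :=
    norm_sum_inner_smul_sub_two_smul_sum_le hu hH hHε hε1 hc hGS.norm_eq_one i hprev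
  have hw : w - u i = gsFirstOrder H u i + ⟪u i, H (u i)⟫ • u i - r := by
    simp only [w, r, gsFirstOrder]; abel
  have hwu : ‖w - u i‖ ≤ m * ε := by
    have hcoef : ‖⟪u i, H (u i)⟫ • u i‖ ≤ ε := by
      rw [norm_smul, hu.norm_eq_one, mul_one, Real.norm_eq_abs]
      exact (hu.abs_inner_apply_le H i i).trans hHε
    have hG := (norm_gsFirstOrder_le hu i (H := H)).trans (by gcongr : 4 * ‖H‖ ≤ 4 * ε)
    rw [hw]
    calc _ ≤ 4 * ε + ε + k * (4 * c + 12) * ε ^ 2 :=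
          norm_sub_le_of_le (norm_add_le_of_le hG hcoef) hr
      _ ≤ m * ε := by nlinarith [mul_nonneg hk (mul_nonneg hε0 (sub_nonneg.mpr hε1))]
  have hinner : ⟪u i, w - u i⟫ = ⟪u i, H (u i)⟫ - ⟪u i, r⟫ := by
    rw [hw, inner_sub_right, inner_add_right, inner_gsFirstOrder_self hu, real_inner_smul_right,
      real_inner_self_eq_norm_sq, hu.norm_eq_one]
    ring
  have hsplit : u' i - u i - gsFirstOrder H u i =
      (‖w‖⁻¹ • w - (w - ⟪u i, w - u i⟫ • u i)) + (⟪u i, r⟫ • u i - r) := by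
    rw [(hGS i).2, hinner]
    linear_combination (norm := module) hw
  calc _ ≤ 6 * ‖w - u i‖ ^ 2 + (|⟪u i, r⟫| + ‖r‖) := by
        rw [hsplit]
        refine norm_add_le_of_le (norm_inv_smul_sub_le (hu.norm_eq_one i) (hwu.trans hsmall)) ?_
        refine (norm_sub_le _ _).trans_eq ?_
        rw [norm_smul, hu.norm_eq_one, mul_one, Real.norm_eq_abs]
    _ ≤ 6 * (m * ε) ^ 2 + (‖r‖ + ‖r‖) := by
        gcongr
        exact (abs_real_inner_le_norm _ _).trans_eq (by rw [hu.norm_eq_one, one_mul])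
    _ ≤ 6 * (m * ε) ^ 2 + 2 * (k * (4 * c + 12) * ε ^ 2) := by linarith
    _ = _ := by ring

variable (E k) in
theorem exists_norm_gramSchmidt_sub_gsFirstOrder_le :
    ∃ C > 0, ∃ δ > 0, ∀ (u u' : Fin k → E) (H : E →L[ℝ] E) (ε : ℝ), Orthonormal ℝ u →
      (H : E →ₗ[ℝ] E).IsSymmetric → ‖H‖ ≤ ε → ε ≤ δ →
      IsGramSchmidt (fun i => u i + H (u i)) u' →
      ∀ i, ‖u' i - u i - gsFirstOrder H u i‖ ≤ C * ε ^ 2 := by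
  suffices ∀ n : ℕ, ∃ C > 0, ∃ δ > 0, ∀ (u u' : Fin k → E) (H : E →L[ℝ] E) (ε : ℝ),
      Orthonormal ℝ u → (H : E →ₗ[ℝ] E).IsSymmetric → ‖H‖ ≤ ε → ε ≤ δ →
      IsGramSchmidt (fun i => u i + H (u i)) u' →
      ∀ i : Fin k, (i : ℕ) < n → ‖u' i - u i - gsFirstOrder H u i‖ ≤ C * ε ^ 2 by
    obtain ⟨C, hC, δ, hδ, h⟩ := this k
    exact ⟨C, hC, δ, hδ, fun u u' H ε hu hH hHε hεδ hGS i => h u u' H ε hu hH hHε hεδ hGS i i.2⟩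
  intro n
  induction n with
  | zero => exact ⟨1, one_pos, 1, one_pos, fun _ _ _ _ _ _ _ _ _ i hi => absurd hi (by omega)⟩
  | succ n ih =>
    obtain ⟨c, hc, δ, hδ, h⟩ := ih
    set m : ℝ := 5 + k * (4 * c + 12)
    have hm : 0 < m := by positivity
    refine ⟨6 * m ^ 2 + 2 * (k * (4 * c + 12)), by positivity, min δ (1 / (2 * m)),
      by positivity, fun u u' H ε hu hH hHε hεδ hGS i _ => ?_⟩
    refine norm_gramSchmidt_sub_gsFirstOrder_le_of_forall_lt hu hH hHε hGS hc.le ?_ i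
      fun j hji => h u u' H ε hu hH hHε (hεδ.trans (min_le_left _ _)) hGS j (by omega)
    calc m * ε ≤ m * (1 / (2 * m)) := by gcongr; exact hεδ.trans (min_le_right _ _)
      _ = 1 / 2 := by field_simp

theorem Orthonormal.norm_sub_two_smul_sum_inner_smul_le {v : Fin k → E} (hv : Orthonormal ℝ v)
    (y : E) : ‖y - (2 : ℝ) • ∑ j, ⟪v j, y⟫ • v j‖ ≤ 3 * ‖y‖ := by
  calc _ ≤ ‖y‖ + 2 * ‖y‖ := by
        refine norm_sub_le_of_le le_rfl ?_
        rw [norm_smul, Real.norm_two]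
        gcongr
        exact hv.norm_sum_inner_smul_le _ _
    _ = 3 * ‖y‖ := by ring

theorem le_mul_exp_of_le_one_add_mul {a : ℕ → ℝ} {q : ℝ} {N : ℕ} (ha₀ : 0 ≤ a 0) (hq : 0 ≤ q)
    (ha : ∀ n < N, a (n + 1) ≤ (1 + q) * a n) : ∀ n ≤ N, a n ≤ a 0 * Real.exp (n * q) := by
  intro n hn
  induction n with
  | zero => simp
  | succ n ih =>
    calc a (n + 1) ≤ (1 + q) * (a 0 * Real.exp (n * q)) :=
          (ha n hn).trans (mul_le_mul_of_nonneg_left (ih (by omega)) (by linarith))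
      _ ≤ Real.exp q * (a 0 * Real.exp (n * q)) := by
          gcongr; linarith [Real.add_one_le_exp q]
      _ = a 0 * Real.exp ((n + 1 : ℕ) * q) := by
          rw [Nat.cast_succ, add_mul, one_mul, Real.exp_add]; ring

theorem one_add_norm_le_of_reflected_euler {F : E → E} {L β τ : ℝ} {N : ℕ} {x : ℕ → E}
    {v : ℕ → Fin k → E} (hL : 0 ≤ L) (hβ : 0 ≤ β) (hτ : 0 ≤ τ)
    (hgrow : ∀ y, ‖F y‖ ≤ L * (1 + ‖y‖)) (hv : ∀ n < N, Orthonormal ℝ (v n))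
    (hx : ∀ n < N, x (n + 1) = x n + τ • (β • (F (x n) - (2 : ℝ) • ∑ j, ⟪v n j, F (x n)⟫ • v n j)))
    {n : ℕ} (hn : n ≤ N) : 1 + ‖x n‖ ≤ (1 + ‖x 0‖) * Real.exp (3 * β * L * (N * τ)) := by
  have hgrowth := le_mul_exp_of_le_one_add_mul (a := fun n => 1 + ‖x n‖) (q := τ * (3 * β * L))
    (by positivity) (by positivity) (fun m hm => ?_) n hn
  · refine hgrowth.trans ?_
    gcongr (1 + ‖x 0‖) * Real.exp ?_
    have hnN : (n : ℝ) ≤ N := by exact_mod_cast hn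
    nlinarith [mul_le_mul_of_nonneg_right hnN (by positivity : 0 ≤ τ * (3 * β * L))]
  calc 1 + ‖x (m + 1)‖ ≤ 1 + (‖x m‖ + τ * (β * (3 * ‖F (x m)‖))) := by
        rw [hx m hm]
        gcongr 1 + ?_
        refine (norm_add_le _ _).trans ?_
        rw [norm_smul, norm_smul, Real.norm_of_nonneg hτ, Real.norm_of_nonneg hβ]
        gcongr
        exact (hv m hm).norm_sub_two_smul_sum_inner_smul_le _
    _ ≤ 1 + (‖x m‖ + τ * (β * (3 * (L * (1 + ‖x m‖))))) := by gcongr; exact hgrow _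
    _ = (1 + τ * (3 * β * L)) * (1 + ‖x m‖) := by ring

theorem inv_smul_sub_gsFirstOrder_smul {τ : ℝ} (hτ : τ ≠ 0) (γ : ℝ) (A : E →L[ℝ] E)
    (u : Fin k → E) (i : Fin k) (y : E) :
    τ⁻¹ • (y - gsFirstOrder ((τ * γ) • A) u i) = τ⁻¹ • y - γ • A (u i) -
      γ • ((-⟪u i, A (u i)⟫) • u i - (2 : ℝ) • ∑ j ∈ Iio i, ⟪u j, A (u i)⟫ • u j) := by
  rw [gsFirstOrder_smul, gsFirstOrder]
  match_scalars <;> field_simp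

theorem hisd_stmt1_general
    (d k : ℕ)
    (F : EuclideanSpace ℝ (Fin d) → EuclideanSpace ℝ (Fin d))
    (J : EuclideanSpace ℝ (Fin d) → (EuclideanSpace ℝ (Fin d) →L[ℝ] EuclideanSpace ℝ (Fin d)))
    (hJsymm : ∀ x u w, ⟪J x u, w⟫ = ⟪u, J x w⟫)
    (L : ℝ) (hL : 0 < L)
    (hLip : ∀ x₁ x₂ : EuclideanSpace ℝ (Fin d), ‖J x₂ - J x₁‖ + ‖F x₂ - F x₁‖ ≤ L * ‖x₂ - x₁‖)
    (hgrow : ∀ x : EuclideanSpace ℝ (Fin d), ‖F x‖ ≤ L * (1 + ‖x‖))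
    (β γ : ℝ) (hβ : 0 < β) (hγ : 0 < γ)
    (T : ℝ) (hT : 0 < T)
    (x₀ : EuclideanSpace ℝ (Fin d))
    (v₀ : Fin k → EuclideanSpace ℝ (Fin d))
    (hv₀ : ∀ i j : Fin k, ⟪v₀ i, v₀ j⟫ = if i = j then (1:ℝ) else 0) :
    ∃ τ₀ > (0:ℝ), ∃ Q > (0:ℝ), ∀ (N : ℕ) (τ : ℝ), 0 < N → τ = T / N → τ ≤ τ₀ →
      ∀ (x : ℕ → EuclideanSpace ℝ (Fin d)) (v : ℕ → Fin k → EuclideanSpace ℝ (Fin d)),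
        x 0 = x₀ → v 0 = v₀ →
        (∀ n < N, x (n+1) = x n + τ •
            (β • (F (x n) - (2:ℝ) • ∑ j, ⟪v n j, F (x n)⟫ • v n j))) →
        (∀ n < N, ∀ i : Fin k,
          let vt := v n i + (τ * γ) • J (x n) (v n i)
          let w := vt - ∑ j ∈ Finset.Iio i, ⟪vt, v (n+1) j⟫ • v (n+1) j
          w ≠ 0 ∧ v (n+1) i = ‖w‖⁻¹ • w) →
        ∀ n < N, ∀ i : Fin k,
          ‖τ⁻¹ • (v (n+1) i - v n i) - γ • J (x n) (v n i) -
            γ • ((-⟪v n i, J (x n) (v n i)⟫) • v n i -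
              (2:ℝ) • ∑ j ∈ Finset.Iio i, ⟪v n j, J (x n) (v n i)⟫ • v n j)‖ ≤ Q * τ := by
  obtain ⟨C, hC, δ, hδ, hGS⟩ :=
    exists_norm_gramSchmidt_sub_gsFirstOrder_le (EuclideanSpace ℝ (Fin d)) k
  set M := ‖J x₀‖ + L * ((1 + ‖x₀‖) * Real.exp (3 * β * L * T) + ‖x₀‖) with hM
  refine ⟨δ / (γ * M), by positivity, C * (γ * M) ^ 2, by positivity, ?_⟩
  intro N τ hN hτ hτ₀ x v hx0 hv0 hx hv n hn i
  have hτ0 : 0 < τ := hτ ▸ by positivity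
  have horth : ∀ m ≤ N, Orthonormal ℝ (v m) := by
    rintro (_ | m) hm
    · exact hv0 ▸ orthonormal_iff_ite.mpr hv₀
    · exact IsGramSchmidt.orthonormal (hv m (by omega))
  have hJ : ‖J (x n)‖ ≤ M := by
    have hxn := one_add_norm_le_of_reflected_euler hL.le hβ.le hτ0.le hgrow
      (fun m hm => horth m hm.le) hx hn.le
    rw [hx0, hτ, mul_div_cancel₀ _ (by positivity)] at hxn
    calc ‖J (x n)‖ ≤ ‖J x₀‖ + L * ‖x n - x₀‖ := by
          linarith [norm_le_insert' (J (x n)) (J x₀), hLip x₀ (x n), norm_nonneg (F (x n) - F x₀)]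
      _ ≤ M := by rw [hM]; gcongr; linarith [norm_sub_le (x n) x₀]
  set H := (τ * γ) • J (x n)
  have hH : ‖H‖ ≤ τ * γ * M := by
    rw [norm_smul, Real.norm_of_nonneg (by positivity)]; gcongr
  have hsmall : τ * γ * M ≤ δ := by
    rw [le_div_iff₀ (by positivity)] at hτ₀; linarith
  have herr := hGS (v n) (v (n + 1)) H _ (horth n hn.le)
    (fun p q => by simp [H, real_inner_smul_left, real_inner_smul_right, hJsymm]) hH hsmall
    (hv n hn) i
  calc _ = τ⁻¹ * ‖v (n + 1) i - v n i - gsFirstOrder H (v n) i‖ := by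
        rw [← inv_smul_sub_gsFirstOrder_smul hτ0.ne', norm_smul,
          Real.norm_of_nonneg (by positivity)]
    _ ≤ τ⁻¹ * (C * (τ * γ * M) ^ 2) := by gcongr
    _ = C * (γ * M) ^ 2 * τ := by field_simp

theorem hisd_stmt1
    (d k : ℕ) (hd : 1 ≤ d) (hk : 1 ≤ k) (hkd : k ≤ d)
    (F : EuclideanSpace ℝ (Fin d) → EuclideanSpace ℝ (Fin d))
    (J : EuclideanSpace ℝ (Fin d) → (EuclideanSpace ℝ (Fin d) →L[ℝ] EuclideanSpace ℝ (Fin d)))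
    (hJsymm : ∀ x u w, ⟪J x u, w⟫ = ⟪u, J x w⟫)
    (L : ℝ) (hL : 0 < L)
    (hLip : ∀ x₁ x₂ : EuclideanSpace ℝ (Fin d), ‖J x₂ - J x₁‖ + ‖F x₂ - F x₁‖ ≤ L * ‖x₂ - x₁‖)
    (hgrow : ∀ x : EuclideanSpace ℝ (Fin d), ‖F x‖ ≤ L * (1 + ‖x‖))
    (β γ : ℝ) (hβ : 0 < β) (hγ : 0 < γ)
    (T : ℝ) (hT : 0 < T)
    (x₀ : EuclideanSpace ℝ (Fin d))
    (v₀ : Fin k → EuclideanSpace ℝ (Fin d))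
    (hv₀ : ∀ i j : Fin k, ⟪v₀ i, v₀ j⟫ = if i = j then (1:ℝ) else 0) :
    ∃ τ₀ > (0:ℝ), ∃ Q > (0:ℝ), ∀ (N : ℕ) (τ : ℝ), 0 < N → τ = T / N → τ ≤ τ₀ →
      ∀ (x : ℕ → EuclideanSpace ℝ (Fin d)) (v : ℕ → Fin k → EuclideanSpace ℝ (Fin d)),
        x 0 = x₀ → v 0 = v₀ →
        (∀ n < N, x (n+1) = x n + τ •
            (β • (F (x n) - (2:ℝ) • ∑ j, ⟪v n j, F (x n)⟫ • v n j))) →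
        (∀ n < N, ∀ i : Fin k,
          let vt := v n i + (τ * γ) • J (x n) (v n i)
          let w := vt - ∑ j ∈ Finset.Iio i, ⟪vt, v (n+1) j⟫ • v (n+1) j
          w ≠ 0 ∧ v (n+1) i = ‖w‖⁻¹ • w) →
        ∀ n < N, ∀ i : Fin k,
          ‖τ⁻¹ • (v (n+1) i - v n i) - γ • J (x n) (v n i) -
            γ • ((-⟪v n i, J (x n) (v n i)⟫) • v n i -
              (2:ℝ) • ∑ j ∈ Finset.Iio i, ⟪v n j, J (x n) (v n i)⟫ • v n j)‖ ≤ Q * τ :=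
  hisd_stmt1_general d k F J hJsymm L hL hLip hgrow β γ hβ hγ T hT x₀ v₀ hv₀
end

section
/- Under Assumption A, there exist τ₀ > 0 and Q > 0, depending only on d, k, L, β, γ, ‖x₀‖ and T, such that for every N ∈ ℕ with τ = T/N ≤ τ₀, the Gram–Schmidt normalization factor of the discrete HiSD scheme satisfies |1 − Y_{i,n}| ≤ |1 − Y_{i,n}²| ≤ Q(Σ_{j=1}^{i−1} ‖v_{j,n} − v_{j,n−1}‖² + τ) for all 1 ≤ i ≤ k and 1 ≤ n ≤ N. -/
open scoped RealInnerProductSpace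

/-!
The Gram–Schmidt output is orthonormal at every step, so `I - 2 ∑ⱼ vⱼ vⱼᵀ` is a reflection and
hence an isometry; with the linear growth of `F` the iterates grow at most geometrically,
`1 + ‖xₙ‖ ≤ exp (β L T) (1 + ‖x₀‖)`, and the Lipschitz bound on `J` then gives a uniform bound
`‖J xₙ‖ ≤ B`. By Pythagoras, `Y² = ‖ṽ‖² - ∑_{j<i} ⟪ṽ, v_{j,n}⟫²`. Here `‖ṽ‖² = 1 + O(τ)`, and since
`v_{i,n-1} ⊥ v_{j,n-1}` we have `⟪ṽ, v_{j,n}⟫ = ⟪v_{i,n-1}, v_{j,n} - v_{j,n-1}⟫ + O(τ)`, whose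
square is at most `2 ‖v_{j,n} - v_{j,n-1}‖² + O(τ²)`.
-/

theorem abs_one_sub_le_abs_one_sub_sq {y : ℝ} (hy : 0 ≤ y) : |1 - y| ≤ |1 - y ^ 2| := by
  rw [show 1 - y ^ 2 = (1 - y) * (1 + y) by ring, abs_mul, abs_of_nonneg (by linarith : 0 ≤ 1 + y)]
  nlinarith [abs_nonneg (1 - y)]

theorem le_exp_mul_of_le_one_add_mul {a : ℕ → ℝ} {h : ℝ} {N : ℕ} (hh : 0 ≤ h) (ha0 : 0 ≤ a 0)
    (ha : ∀ n < N, a (n + 1) ≤ (1 + h) * a n) : ∀ n ≤ N, a n ≤ Real.exp (n * h) * a 0 := by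
  intro n hn
  induction n with
  | zero => simp
  | succ n ih =>
    calc a (n + 1) ≤ (1 + h) * a n := ha n hn
      _ ≤ (1 + h) * (Real.exp (n * h) * a 0) := by gcongr; exact ih (by omega)
      _ ≤ Real.exp h * (Real.exp (n * h) * a 0) := by
          gcongr
          linarith [Real.add_one_le_exp h]
      _ = Real.exp ((n + 1 : ℕ) * h) * a 0 := by
          rw [← mul_assoc, ← Real.exp_add]
          push_cast
          ring_nf

section InnerProductSpace

variable {E ι : Type*} [NormedAddCommGroup E] [InnerProductSpace ℝ E]

theorem inner_sub_sum_inner_smul_eq_zero [DecidableEq ι] {s : Finset ι} {e : ι → E}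
    (he : ∀ l ∈ s, ∀ l' ∈ s, ⟪e l, e l'⟫ = if l = l' then 1 else 0) (x : E) {j : ι} (hj : j ∈ s) :
    ⟪x - ∑ l ∈ s, ⟪x, e l⟫ • e l, e j⟫ = 0 := by
  rw [inner_sub_left, sum_inner, Finset.sum_eq_single_of_mem j hj, real_inner_smul_left,
    he j hj j hj, if_pos rfl, mul_one, sub_self]
  intro l hl hlj
  rw [real_inner_smul_left, he l hl j hj, if_neg hlj, mul_zero]

theorem orthonormal_of_eq_normalize_sub_sum_inner_smul {k : ℕ} (w e : Fin k → E)
    (h : ∀ i, let r := w i - ∑ j ∈ Finset.Iio i, ⟪w i, e j⟫ • e j; r ≠ 0 ∧ e i = ‖r‖⁻¹ • r) :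
    Orthonormal ℝ e := by
  have hunit : ∀ i, ‖e i‖ = 1 := fun i => by
    rw [(h i).2, norm_smul, norm_inv, norm_norm, inv_mul_cancel₀ (norm_ne_zero_iff.2 (h i).1)]
  have horth : ∀ i, ∀ j < i, ⟪e i, e j⟫ = 0 := by
    intro i
    induction i using WellFoundedLT.induction with
    | _ i ih =>
      intro j hj
      have hpair :
          ∀ l ∈ Finset.Iio i, ∀ l' ∈ Finset.Iio i, ⟪e l, e l'⟫ = if l = l' then 1 else 0 := by
        intro l hl l' hl'
        rcases lt_trichotomy l l' with hll' | rfl | hll'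
        · rw [real_inner_comm, ih l' (Finset.mem_Iio.1 hl') l hll', if_neg hll'.ne]
        · rw [real_inner_self_eq_norm_sq, hunit, if_pos rfl, one_pow]
        · rw [ih l (Finset.mem_Iio.1 hl) l' hll', if_neg hll'.ne']
      rw [(h i).2, real_inner_smul_left,
        inner_sub_sum_inner_smul_eq_zero hpair _ (Finset.mem_Iio.2 hj), mul_zero]
  refine ⟨hunit, fun i j hij => ?_⟩
  rcases hij.lt_or_gt with hlt | hgt
  · rw [real_inner_comm]; exact horth j i hlt
  · exact horth i j hgt

theorem Orthonormal.inner_sub_sum_inner_smul_sum_eq_zero {s : Finset ι} {e : ι → E}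
    (he : Orthonormal ℝ e) (x : E) :
    ⟪x - ∑ l ∈ s, ⟪x, e l⟫ • e l, ∑ l ∈ s, ⟪x, e l⟫ • e l⟫ = 0 := by
  classical
  have he' := orthonormal_iff_ite.1 he
  rw [inner_sum]
  exact Finset.sum_eq_zero fun j hj => by
    rw [real_inner_smul_right, inner_sub_sum_inner_smul_eq_zero (fun l _ l' _ => he' l l') x hj,
      mul_zero]

theorem Orthonormal.norm_sub_two_smul_sum_inner_smul [Fintype ι] {e : ι → E}
    (he : Orthonormal ℝ e) (u : E) :
    ‖u - (2 : ℝ) • ∑ j, ⟪e j, u⟫ • e j‖ = ‖u‖ := by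
  simp_rw [real_inner_comm u]
  set p := ∑ j, ⟪u, e j⟫ • e j
  have hp : ⟪u - p, p⟫ = 0 := he.inner_sub_sum_inner_smul_sum_eq_zero u
  have h1 := norm_sub_sq_eq_norm_sq_add_norm_sq_real hp
  have h2 := norm_add_sq_eq_norm_sq_add_norm_sq_real hp
  rw [sub_sub, ← two_smul ℝ p] at h1
  rw [sub_add_cancel] at h2
  rw [← mul_self_inj_of_nonneg (norm_nonneg _) (norm_nonneg _), h1, h2]

theorem Orthonormal.norm_sub_sum_inner_smul_sq {s : Finset ι} {e : ι → E}
    (he : Orthonormal ℝ e) (x : E) :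
    ‖x - ∑ j ∈ s, ⟪x, e j⟫ • e j‖ ^ 2 = ‖x‖ ^ 2 - ∑ j ∈ s, ⟪x, e j⟫ ^ 2 := by
  have hp := he.inner_sub_sum_inner_smul_sum_eq_zero (s := s) x
  have hnorm : ‖∑ j ∈ s, ⟪x, e j⟫ • e j‖ ^ 2 = ∑ j ∈ s, ⟪x, e j⟫ ^ 2 := by
    rw [← real_inner_self_eq_norm_sq, he.inner_sum]
    simp only [conj_trivial, sq]
  have h := norm_add_sq_eq_norm_sq_add_norm_sq_real hp
  rw [sub_add_cancel] at h
  rw [← hnorm, eq_sub_iff_add_eq, sq, sq, sq, h]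

theorem abs_one_sub_norm_add_smul_sq_le {e w : E} (he : ‖e‖ = 1) (a : ℝ) {b : ℝ} (hw : ‖w‖ ≤ b) :
    |1 - ‖e + a • w‖ ^ 2| ≤ 2 * |a| * b + (a * b) ^ 2 := by
  have hexp : ‖e + a • w‖ ^ 2 = 1 + 2 * (a * ⟪e, w⟫) + (a * ‖w‖) ^ 2 := by
    rw [norm_add_sq_real, real_inner_smul_right, norm_smul, Real.norm_eq_abs, he, mul_pow, mul_pow,
      sq_abs]
    ring
  have hinner : |a * ⟪e, w⟫| ≤ |a| * b := by
    rw [abs_mul]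
    gcongr
    exact (abs_real_inner_le_norm e w).trans (by rw [he, one_mul]; exact hw)
  have hsq : (a * ‖w‖) ^ 2 ≤ (a * b) ^ 2 := by
    rw [mul_pow, mul_pow]
    gcongr
  rw [hexp, abs_le]
  constructor <;> linarith [abs_le.1 hinner, sq_nonneg (a * ‖w‖), sq_nonneg (a * b)]

theorem sq_inner_add_smul_le {e f e' w : E} (he : ‖e‖ = 1) (hef : ⟪e, f⟫ = 0) (he' : ‖e'‖ = 1)
    (a : ℝ) {b : ℝ} (hw : ‖w‖ ≤ b) :
    ⟪e + a • w, e'⟫ ^ 2 ≤ 2 * ‖e' - f‖ ^ 2 + 2 * (a * b) ^ 2 := by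
  have hsplit : ⟪e + a • w, e'⟫ = ⟪e, e' - f⟫ + a * ⟪w, e'⟫ := by
    rw [inner_add_left, real_inner_smul_left, inner_sub_right, hef, sub_zero]
  have h1 : ⟪e, e' - f⟫ ^ 2 ≤ ‖e' - f‖ ^ 2 := sq_le_sq.2 <| by
    rw [abs_norm]
    exact (abs_real_inner_le_norm _ _).trans_eq (by rw [he, one_mul])
  have h2 : (a * ⟪w, e'⟫) ^ 2 ≤ (a * b) ^ 2 := sq_le_sq.2 <| by
    rw [abs_mul, abs_mul, abs_of_nonneg ((norm_nonneg w).trans hw)]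
    gcongr
    exact (abs_real_inner_le_norm w e').trans (by rw [he', mul_one]; exact hw)
  rw [hsplit]
  nlinarith [sq_nonneg (⟪e, e' - f⟫ - a * ⟪w, e'⟫)]

open Finset in
theorem abs_one_sub_norm_sub_sum_inner_smul_sq_le {s : Finset ι} {e e' : ι → E}
    (he : Orthonormal ℝ e) (he' : Orthonormal ℝ e') {i : ι} (hi : i ∉ s) (a : ℝ) {w : E} {b : ℝ}
    (hw : ‖w‖ ≤ b) :
    |1 - ‖(e i + a • w) - ∑ j ∈ s, ⟪e i + a • w, e' j⟫ • e' j‖ ^ 2|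
      ≤ 2 * ∑ j ∈ s, ‖e' j - e j‖ ^ 2 + (2 * |a| * b + (1 + 2 * #s) * (a * b) ^ 2) := by
  have hS : ∑ j ∈ s, ⟪e i + a • w, e' j⟫ ^ 2
      ≤ 2 * ∑ j ∈ s, ‖e' j - e j‖ ^ 2 + 2 * #s * (a * b) ^ 2 :=
    calc ∑ j ∈ s, ⟪e i + a • w, e' j⟫ ^ 2
        ≤ ∑ j ∈ s, (2 * ‖e' j - e j‖ ^ 2 + 2 * (a * b) ^ 2) := sum_le_sum fun j hj =>
          sq_inner_add_smul_le (he.1 i) (he.inner_eq_zero (ne_of_mem_of_not_mem hj hi).symm)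
            (he'.1 j) a hw
      _ = 2 * ∑ j ∈ s, ‖e' j - e j‖ ^ 2 + 2 * #s * (a * b) ^ 2 := by
          rw [sum_add_distrib, ← mul_sum, sum_const, nsmul_eq_mul]
          ring
  have hS0 : 0 ≤ ∑ j ∈ s, ⟪e i + a • w, e' j⟫ ^ 2 := sum_nonneg fun _ _ => sq_nonneg _
  have hvt := abs_le.1 (abs_one_sub_norm_add_smul_sq_le (he.1 i) a hw)
  rw [he'.norm_sub_sum_inner_smul_sq, abs_le]
  constructor <;> linarith

open Finset in
theorem abs_one_sub_norm_sub_sum_inner_smul_sq_le_mul_add {s : Finset ι} {e e' : ι → E}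
    (he : Orthonormal ℝ e) (he' : Orthonormal ℝ e') {i : ι} (hi : i ∉ s) {k : ℕ} (hs : #s ≤ k)
    {τ γ B : ℝ} (hτ : 0 ≤ τ) (hτ1 : τ ≤ 1) (hγ : 0 ≤ γ) {w : E} (hw : ‖w‖ ≤ B) :
    |1 - ‖(e i + (τ * γ) • w) - ∑ j ∈ s, ⟪e i + (τ * γ) • w, e' j⟫ • e' j‖ ^ 2|
      ≤ (2 + 2 * γ * B + (1 + 2 * k) * (γ * B) ^ 2) * (∑ j ∈ s, ‖e' j - e j‖ ^ 2 + τ) := by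
  refine (abs_one_sub_norm_sub_sum_inner_smul_sq_le he he' hi (τ * γ) hw).trans ?_
  have hB : 0 ≤ B := (norm_nonneg _).trans hw
  have hk : (#s : ℝ) ≤ k := by exact_mod_cast hs
  have hsq : (τ * γ * B) ^ 2 ≤ τ * (γ * B) ^ 2 := by
    rw [mul_assoc, mul_pow]
    gcongr
    nlinarith
  have hΔ : 0 ≤ ∑ j ∈ s, ‖e' j - e j‖ ^ 2 := sum_nonneg fun _ _ => sq_nonneg _
  rw [abs_of_nonneg (mul_nonneg hτ hγ)]
  nlinarith [mul_le_mul_of_nonneg_left hsq (by positivity : (0 : ℝ) ≤ 1 + 2 * #s),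
    mul_le_mul_of_nonneg_right hk (by positivity : 0 ≤ τ * (γ * B) ^ 2),
    mul_nonneg (mul_nonneg hγ hB) hΔ, mul_nonneg (sq_nonneg (γ * B)) hΔ]

theorem one_add_norm_add_smul_reflection_le [Fintype ι] {e : ι → E} (he : Orthonormal ℝ e)
    {τ β L : ℝ} (hτ : 0 ≤ τ) (hβ : 0 ≤ β) {y u : E} (hu : ‖u‖ ≤ L * (1 + ‖y‖)) :
    1 + ‖y + τ • (β • (u - (2 : ℝ) • ∑ j, ⟪e j, u⟫ • e j))‖ ≤ (1 + τ * β * L) * (1 + ‖y‖) := by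
  have hstep : ‖τ • (β • (u - (2 : ℝ) • ∑ j, ⟪e j, u⟫ • e j))‖ = τ * β * ‖u‖ := by
    rw [norm_smul, norm_smul, he.norm_sub_two_smul_sum_inner_smul, Real.norm_of_nonneg hτ,
      Real.norm_of_nonneg hβ, mul_assoc]
  have := mul_le_mul_of_nonneg_left hu (mul_nonneg hτ hβ)
  nlinarith [norm_add_le y (τ • (β • (u - (2 : ℝ) • ∑ j, ⟪e j, u⟫ • e j)))]

theorem one_add_norm_le_exp_of_reflection_steps [Fintype ι] {F : E → E} {L β τ : ℝ} {N : ℕ}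
    {x : ℕ → E} {v : ℕ → ι → E} (hL : 0 ≤ L) (hβ : 0 ≤ β) (hτ : 0 ≤ τ)
    (hgrow : ∀ y, ‖F y‖ ≤ L * (1 + ‖y‖)) (hv : ∀ n < N, Orthonormal ℝ (v n))
    (hx : ∀ n < N,
      x (n + 1) = x n + τ • (β • (F (x n) - (2 : ℝ) • ∑ j, ⟪v n j, F (x n)⟫ • v n j))) :
    ∀ n ≤ N, 1 + ‖x n‖ ≤ Real.exp (β * L * (N * τ)) * (1 + ‖x 0‖) := by
  intro n hn
  refine (le_exp_mul_of_le_one_add_mul (a := fun n => 1 + ‖x n‖) (by positivity) (by positivity)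
    (fun m hm => hx m hm ▸ one_add_norm_add_smul_reflection_le (hv m hm) hτ hβ (hgrow _))
    n hn).trans ?_
  refine mul_le_mul_of_nonneg_right (Real.exp_le_exp.2 ?_) (by positivity)
  calc (n : ℝ) * (τ * β * L) = β * L * (n * τ) := by ring
    _ ≤ β * L * (N * τ) := by gcongr

end InnerProductSpace

theorem hisd_stmt2_general
    (d k : ℕ)
    (F : EuclideanSpace ℝ (Fin d) → EuclideanSpace ℝ (Fin d))
    (J : EuclideanSpace ℝ (Fin d) → (EuclideanSpace ℝ (Fin d) →L[ℝ] EuclideanSpace ℝ (Fin d)))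
    (L : ℝ) (hL : 0 < L)
    (hLip : ∀ x₁ x₂ : EuclideanSpace ℝ (Fin d), ‖J x₂ - J x₁‖ + ‖F x₂ - F x₁‖ ≤ L * ‖x₂ - x₁‖)
    (hgrow : ∀ x : EuclideanSpace ℝ (Fin d), ‖F x‖ ≤ L * (1 + ‖x‖))
    (β γ : ℝ) (hβ : 0 < β) (hγ : 0 < γ)
    (T : ℝ) (hT : 0 < T)
    (x₀ : EuclideanSpace ℝ (Fin d))
    (v₀ : Fin k → EuclideanSpace ℝ (Fin d))
    (hv₀ : ∀ i j : Fin k, ⟪v₀ i, v₀ j⟫ = if i = j then (1:ℝ) else 0) :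
    ∃ τ₀ > (0:ℝ), ∃ Q > (0:ℝ), ∀ (N : ℕ) (τ : ℝ), 0 < N → τ = T / N → τ ≤ τ₀ →
      ∀ (x : ℕ → EuclideanSpace ℝ (Fin d)) (v : ℕ → Fin k → EuclideanSpace ℝ (Fin d)),
        x 0 = x₀ → v 0 = v₀ →
        (∀ n < N, x (n+1) = x n + τ •
            (β • (F (x n) - (2:ℝ) • ∑ j, ⟪v n j, F (x n)⟫ • v n j))) →
        (∀ n < N, ∀ i : Fin k,
          let vt := v n i + (τ * γ) • J (x n) (v n i)
          let w := vt - ∑ j ∈ Finset.Iio i, ⟪vt, v (n+1) j⟫ • v (n+1) j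
          w ≠ 0 ∧ v (n+1) i = ‖w‖⁻¹ • w) →
        ∀ n < N, ∀ i : Fin k,
          let vt := v n i + (τ * γ) • J (x n) (v n i)
          let Y := ‖vt - ∑ j ∈ Finset.Iio i, ⟪vt, v (n+1) j⟫ • v (n+1) j‖
          |1 - Y| ≤ |1 - Y^2| ∧
            |1 - Y^2| ≤ Q * ((∑ j ∈ Finset.Iio i, ‖v (n+1) j - v n j‖^2) + τ) := by
  set M := Real.exp (β * L * T) * (1 + ‖x₀‖)
  set B := ‖J x₀‖ + L * (M + ‖x₀‖)
  refine ⟨1, one_pos, 2 + 2 * γ * B + (1 + 2 * k) * (γ * B) ^ 2, by positivity, ?_⟩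
  intro N τ hN hτ hτ1 x v hx0 hv0 hX hGS
  have hNτ : N * τ = T := by rw [hτ]; field_simp
  have hON : ∀ n ≤ N, Orthonormal ℝ (v n) := by
    rintro (_ | n) hn
    · rw [hv0, orthonormal_iff_ite]
      exact hv₀
    · exact orthonormal_of_eq_normalize_sub_sum_inner_smul _ _ (hGS n hn)
  have hx : ∀ n ≤ N, 1 + ‖x n‖ ≤ M := by
    simpa only [hNτ, hx0] using one_add_norm_le_exp_of_reflection_steps hL.le hβ.le
      (hτ ▸ by positivity) hgrow (fun n hn => hON n hn.le) hX
  have hJ : ∀ n ≤ N, ‖J (x n)‖ ≤ B := fun n hn =>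
    calc ‖J (x n)‖ ≤ ‖J x₀‖ + ‖J (x n) - J x₀‖ := norm_le_norm_add_norm_sub' _ _
      _ ≤ ‖J x₀‖ + L * (‖x n‖ + ‖x₀‖) := by
          grw [← norm_sub_le]
          linarith [hLip x₀ (x n), norm_nonneg (F (x n) - F x₀)]
      _ ≤ ‖J x₀‖ + L * (M + ‖x₀‖) := by grw [← hx n hn]; linarith
  intro n hn i vt Y
  have hw : ‖J (x n) (v n i)‖ ≤ B :=
    ((J (x n)).le_opNorm _).trans (by rw [(hON n hn.le).1 i, mul_one]; exact hJ n hn.le)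
  exact ⟨abs_one_sub_le_abs_one_sub_sq (norm_nonneg _),
    abs_one_sub_norm_sub_sum_inner_smul_sq_le_mul_add (hON n hn.le) (hON (n + 1) hn)
      Finset.notMem_Iio_self ((Finset.Iio i).card_le_univ.trans_eq (Fintype.card_fin k))
      (hτ ▸ by positivity) hτ1 hγ.le hw⟩

theorem hisd_stmt2
    (d k : ℕ) (hd : 1 ≤ d) (hk : 1 ≤ k) (hkd : k ≤ d)
    (F : EuclideanSpace ℝ (Fin d) → EuclideanSpace ℝ (Fin d))
    (J : EuclideanSpace ℝ (Fin d) → (EuclideanSpace ℝ (Fin d) →L[ℝ] EuclideanSpace ℝ (Fin d)))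
    (hJsymm : ∀ x u w, ⟪J x u, w⟫ = ⟪u, J x w⟫)
    (L : ℝ) (hL : 0 < L)
    (hLip : ∀ x₁ x₂ : EuclideanSpace ℝ (Fin d), ‖J x₂ - J x₁‖ + ‖F x₂ - F x₁‖ ≤ L * ‖x₂ - x₁‖)
    (hgrow : ∀ x : EuclideanSpace ℝ (Fin d), ‖F x‖ ≤ L * (1 + ‖x‖))
    (β γ : ℝ) (hβ : 0 < β) (hγ : 0 < γ)
    (T : ℝ) (hT : 0 < T)
    (x₀ : EuclideanSpace ℝ (Fin d))
    (v₀ : Fin k → EuclideanSpace ℝ (Fin d))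
    (hv₀ : ∀ i j : Fin k, ⟪v₀ i, v₀ j⟫ = if i = j then (1:ℝ) else 0) :
    ∃ τ₀ > (0:ℝ), ∃ Q > (0:ℝ), ∀ (N : ℕ) (τ : ℝ), 0 < N → τ = T / N → τ ≤ τ₀ →
      ∀ (x : ℕ → EuclideanSpace ℝ (Fin d)) (v : ℕ → Fin k → EuclideanSpace ℝ (Fin d)),
        x 0 = x₀ → v 0 = v₀ →
        (∀ n < N, x (n+1) = x n + τ •
            (β • (F (x n) - (2:ℝ) • ∑ j, ⟪v n j, F (x n)⟫ • v n j))) →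
        (∀ n < N, ∀ i : Fin k,
          let vt := v n i + (τ * γ) • J (x n) (v n i)
          let w := vt - ∑ j ∈ Finset.Iio i, ⟪vt, v (n+1) j⟫ • v (n+1) j
          w ≠ 0 ∧ v (n+1) i = ‖w‖⁻¹ • w) →
        ∀ n < N, ∀ i : Fin k,
          let vt := v n i + (τ * γ) • J (x n) (v n i)
          let Y := ‖vt - ∑ j ∈ Finset.Iio i, ⟪vt, v (n+1) j⟫ • v (n+1) j‖
          |1 - Y| ≤ |1 - Y^2| ∧
            |1 - Y^2| ≤ Q * ((∑ j ∈ Finset.Iio i, ‖v (n+1) j - v n j‖^2) + τ) :=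
  hisd_stmt2_general d k F J L hL hLip hgrow β γ hβ hγ T hT x₀ v₀ hv₀
end

section
/- Under Assumption A, there exist τ₀ > 0 and Q > 0, depending only on d, k, L, β, γ, ‖x₀‖ and T, such that for every N ∈ ℕ with τ = T/N ≤ τ₀, the iterates of the discrete HiSD scheme satisfy, for all 1 ≤ i ≤ k and 1 ≤ n ≤ N, ‖Σ_{j=1}^{i−1} (v_{i,n−1}ᵀ v_{j,n}) v_{j,n} − τ γ Σ_{j=1}^{i−1} (v_{i,n−1}ᵀ J(x_{n−1}) v_{j,n−1}) v_{j,n−1}‖ ≤ Q τ². -/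
/-!
Write the Gram–Schmidt input as `u + δ`, with `u = v_{·,n-1}` orthonormal and
`δ j = τγ J(x_{n-1}) v_{j,n-1}` of size `ε = O(τ)`. Gram–Schmidt moves every vector by `O(ε)`:
the error of the `j`-th output is controlled by the errors of the earlier ones, and a discrete
Grönwall inequality over the index closes this recursion. For `j < i` the coefficient
`⟪u i, v_{j,n}⟫` then equals `⟪u i, δ j⟫` up to `O(ε²)`, because `⟪u i, u j⟫ = 0` and every other
contribution (normalisation, projections onto the earlier `v_{l,n}`) is a product of two `O(ε)`
factors. The constant only involves `k` and a bound on `‖J(x_n)‖`, and `‖x_n‖` stays bounded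
since the update of `x` applies a reflection, an isometry, to `F`: `1 + ‖x_n‖` grows at most like
`exp(|β| L T)`.
-/

open scoped RealInnerProductSpace

open Finset NormedSpace InnerProductSpace

section Normalize

variable {V : Type*} [NormedAddCommGroup V] [NormedSpace ℝ V]

lemma norm_normalize_le_one (x : V) : ‖normalize x‖ ≤ 1 := by
  by_cases hx : x = 0
  · simp [hx]
  · exact (norm_normalize hx).le

lemma normalize_sub_self (x : V) : normalize x - x = (1 - ‖x‖) • normalize x := by
  nth_rewrite 2 [← norm_smul_normalize x]
  rw [sub_smul, one_smul]

lemma norm_normalize_sub_le {u : V} (hu : ‖u‖ = 1) (w : V) :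
    ‖normalize w - u‖ ≤ 2 * ‖w - u‖ := by
  have hnorm : |1 - ‖w‖| ≤ ‖w - u‖ := by
    simpa [hu, abs_sub_comm] using abs_norm_sub_norm_le w u
  calc ‖normalize w - u‖ = ‖(normalize w - w) + (w - u)‖ := by rw [sub_add_sub_cancel]
    _ ≤ |1 - ‖w‖| * ‖normalize w‖ + ‖w - u‖ := by
      grw [norm_add_le, normalize_sub_self, norm_smul, Real.norm_eq_abs]
    _ ≤ 2 * ‖w - u‖ := by
      nlinarith [norm_normalize_le_one w, abs_nonneg (1 - ‖w‖), norm_nonneg (normalize w)]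

end Normalize

section GramSchmidt

variable {E : Type*} [NormedAddCommGroup E] [InnerProductSpace ℝ E]
  {ι : Type*} [LinearOrder ι] [LocallyFiniteOrderBot ι]

def gramSchmidtResidual (f g : ι → E) (i : ι) : E :=
  f i - ∑ j ∈ Iio i, ⟪f i, g j⟫ • g j

variable [WellFoundedLT ι]

lemma gramSchmidtResidual_gramSchmidtNormed (f : ι → E) (i : ι) :
    gramSchmidtResidual f (gramSchmidtNormed ℝ f) i = gramSchmidt ℝ f i := by
  rw [eq_sub_of_add_eq (gramSchmidt_def'' ℝ f i).symm, gramSchmidtResidual]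
  refine congrArg _ (sum_congr rfl fun j _ => ?_)
  simp only [gramSchmidtNormed, RCLike.ofReal_real_eq_id, id, inner_smul_right, smul_smul,
    real_inner_comm (f i)]
  congr 1
  ring

lemma gramSchmidtNormed_eq_normalize_gramSchmidtResidual (f : ι → E) (i : ι) :
    gramSchmidtNormed ℝ f i = normalize (gramSchmidtResidual f (gramSchmidtNormed ℝ f) i) := by
  rw [gramSchmidtResidual_gramSchmidtNormed]
  rfl

lemma norm_gramSchmidtNormed_le_one (f : ι → E) (i : ι) : ‖gramSchmidtNormed ℝ f i‖ ≤ 1 :=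
  norm_normalize_le_one _

lemma eq_gramSchmidtNormed_of_forall_eq_normalize {f v : ι → E}
    (h : ∀ i, v i = normalize (gramSchmidtResidual f v i)) : v = gramSchmidtNormed ℝ f := by
  funext i
  induction i using WellFoundedLT.induction with
  | ind i ih =>
    have hres : gramSchmidtResidual f v i = gramSchmidtResidual f (gramSchmidtNormed ℝ f) i := by
      unfold gramSchmidtResidual
      exact congrArg _ (sum_congr rfl fun j hj => by rw [ih j (mem_Iio.mp hj)])
    rw [h i, hres, ← gramSchmidtNormed_eq_normalize_gramSchmidtResidual]

lemma orthonormal_of_forall_eq_normalize {f v : ι → E}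
    (h : ∀ i, gramSchmidtResidual f v i ≠ 0 ∧ v i = normalize (gramSchmidtResidual f v i)) :
    Orthonormal ℝ v := by
  refine ⟨fun i => (h i).2 ▸ norm_normalize (h i).1, fun i j hij => ?_⟩
  rw [eq_gramSchmidtNormed_of_forall_eq_normalize fun i => (h i).2]
  simp [gramSchmidtNormed, inner_smul_left, inner_smul_right, gramSchmidt_orthogonal ℝ f hij]

end GramSchmidt

namespace Fin

variable {k : ℕ}

lemma sum_Iio_le_mul {f : Fin k → ℝ} {c : ℝ} (hc : 0 ≤ c) {j : Fin k}
    (h : ∀ l ∈ Iio j, f l ≤ c) : ∑ l ∈ Iio j, f l ≤ k * c := by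
  grw [sum_le_card_nsmul _ _ _ h, nsmul_eq_mul, card_Iio, show ((j : ℕ) : ℝ) ≤ k by
    exact_mod_cast j.isLt.le]

lemma le_mul_pow_of_le_add_mul_sum {e : Fin k → ℝ} {a b : ℝ} (hb : 0 ≤ b)
    (h : ∀ j, e j ≤ a + b * ∑ l ∈ Iio j, e l) (j : Fin k) : e j ≤ a * (1 + b) ^ (j : ℕ) := by
  induction j using WellFoundedLT.induction with
  | ind j ih =>
    have hgeom : b * ∑ l ∈ Iio j, (1 + b) ^ (l : ℕ) = (1 + b) ^ (j : ℕ) - 1 := by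
      have hsum : ∑ l ∈ Iio j, (1 + b) ^ (l : ℕ) = ∑ m ∈ range j, (1 + b) ^ m := by
        rw [← Nat.Iio_eq_range, ← map_valEmbedding_Iio, sum_map]; rfl
      rw [hsum, mul_comm, ← geom_sum_mul, add_sub_cancel_left]
    calc e j ≤ a + b * ∑ l ∈ Iio j, a * (1 + b) ^ (l : ℕ) := by
          grw [h j]; gcongr with l hl; exact ih l (mem_Iio.mp hl)
      _ = a * (1 + b) ^ (j : ℕ) := by rw [← mul_sum, mul_left_comm, hgeom]; ring

end Fin

section Perturbation

variable {E : Type*} [NormedAddCommGroup E] [InnerProductSpace ℝ E] {k : ℕ}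
  {u δ : Fin k → E} {ε : ℝ}

lemma abs_inner_le_of_inner_eq_zero {x y b : E} (hxy : ⟪x, y⟫ = 0) (hx : ‖x‖ = 1) (hb : ‖b‖ ≤ 1)
    (a : E) : |⟪a, b⟫| ≤ ‖a - x‖ + ‖b - y‖ := by
  have hsplit : ⟪a, b⟫ = ⟪a - x, b⟫ + ⟪x, b - y⟫ := by
    rw [inner_sub_left, inner_sub_right, hxy]; ring
  rw [hsplit]
  calc |⟪a - x, b⟫ + ⟪x, b - y⟫| ≤ ‖a - x‖ * ‖b‖ + ‖x‖ * ‖b - y‖ :=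
        (abs_add_le _ _).trans
          (add_le_add (abs_real_inner_le_norm _ _) (abs_real_inner_le_norm _ _))
    _ ≤ ‖a - x‖ + ‖b - y‖ := by
        rw [hx, one_mul]; gcongr; exact mul_le_of_le_one_right (norm_nonneg _) hb

lemma abs_inner_le_norm_sub (hu : Orthonormal ℝ u) {b : E} (hb : ‖b‖ ≤ 1) {i l : Fin k}
    (hil : i ≠ l) : |⟪u i, b⟫| ≤ ‖b - u l‖ := by
  simpa using abs_inner_le_of_inner_eq_zero (hu.inner_eq_zero hil) (hu.1 i) hb (u i)

lemma norm_gramSchmidtResidual_add_sub_le (hu : Orthonormal ℝ u) (hδ : ∀ i, ‖δ i‖ ≤ ε)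
    {v : Fin k → E} (hv : ∀ i, ‖v i‖ ≤ 1) (j : Fin k) :
    ‖gramSchmidtResidual (u + δ) v j - u j‖ ≤ ε + ∑ l ∈ Iio j, (‖v l - u l‖ + ε) := by
  have hcoef : ∀ l ∈ Iio j, ‖⟪u j + δ j, v l⟫ • v l‖ ≤ ‖v l - u l‖ + ε := fun l hl => by
    grw [norm_smul, Real.norm_eq_abs, mul_le_of_le_one_right (abs_nonneg _) (hv l),
      abs_inner_le_of_inner_eq_zero (hu.inner_eq_zero (mem_Iio.mp hl).ne') (hu.1 j) (hv l),
      add_sub_cancel_left, hδ j, add_comm]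
  calc ‖gramSchmidtResidual (u + δ) v j - u j‖
      = ‖δ j - ∑ l ∈ Iio j, ⟪u j + δ j, v l⟫ • v l‖ := by
        rw [gramSchmidtResidual, Pi.add_apply]; congr 1; abel
    _ ≤ ε + ∑ l ∈ Iio j, (‖v l - u l‖ + ε) := by
        grw [norm_sub_le, norm_sum_le, hδ j, sum_le_sum hcoef]

lemma norm_gramSchmidtNormed_add_sub_le (hu : Orthonormal ℝ u) (hδ : ∀ i, ‖δ i‖ ≤ ε)
    (j : Fin k) : ‖gramSchmidtNormed ℝ (u + δ) j - u j‖ ≤ 2 * (1 + k) * ε * 3 ^ (j : ℕ) := by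
  set v := gramSchmidtNormed ℝ (u + δ)
  have hε : 0 ≤ ε := (norm_nonneg _).trans (hδ j)
  have hv : ∀ i, v i = normalize (gramSchmidtResidual (u + δ) v i) :=
    gramSchmidtNormed_eq_normalize_gramSchmidtResidual _
  have hv1 : ∀ i, ‖v i‖ ≤ 1 := norm_gramSchmidtNormed_le_one _
  have hrec : ∀ i, ‖v i - u i‖ ≤ 2 * (1 + k) * ε + 2 * ∑ l ∈ Iio i, ‖v l - u l‖ :=
    fun i => by
    have hcard : ∑ l ∈ Iio i, ε ≤ k * ε := Fin.sum_Iio_le_mul hε fun _ _ => le_rfl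
    calc ‖v i - u i‖ ≤ 2 * ‖gramSchmidtResidual (u + δ) v i - u i‖ := by
          rw [hv i]; exact norm_normalize_sub_le (hu.1 i) _
      _ ≤ 2 * (ε + ∑ l ∈ Iio i, (‖v l - u l‖ + ε)) := by
          grw [norm_gramSchmidtResidual_add_sub_le hu hδ hv1 i]
      _ ≤ 2 * (1 + k) * ε + 2 * ∑ l ∈ Iio i, ‖v l - u l‖ := by
          rw [sum_add_distrib]; linarith
  convert Fin.le_mul_pow_of_le_add_mul_sum zero_le_two hrec j using 2
  norm_num

lemma abs_inner_gramSchmidtNormed_add_sub_inner_le (hu : Orthonormal ℝ u)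
    (hδ : ∀ i, ‖δ i‖ ≤ ε) {i j : Fin k} (hji : j < i) :
    let v := gramSchmidtNormed ℝ (u + δ)
    |⟪u i, v j⟫ - ⟪u i, δ j⟫| ≤ ‖gramSchmidtResidual (u + δ) v j - u j‖ * ‖v j - u j‖ +
      ∑ l ∈ Iio j, (‖v l - u l‖ + ε) * ‖v l - u l‖ := by
  intro v
  set w := gramSchmidtResidual (u + δ) v j
  have hε : 0 ≤ ε := (norm_nonneg _).trans (hδ j)
  have hv : ∀ i, v i = normalize (gramSchmidtResidual (u + δ) v i) :=
    gramSchmidtNormed_eq_normalize_gramSchmidtResidual _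
  have hv1 : ∀ l, ‖v l‖ ≤ 1 := norm_gramSchmidtNormed_le_one _
  have hcoef : ∀ l, l ≠ i → |⟪u i, v l⟫| ≤ ‖v l - u l‖ := fun l hl =>
    abs_inner_le_norm_sub hu (hv1 l) hl.symm
  have hdecomp : ⟪u i, v j⟫ - ⟪u i, δ j⟫ =
      (1 - ‖w‖) * ⟪u i, v j⟫ - ∑ l ∈ Iio j, ⟪u j + δ j, v l⟫ * ⟪u i, v l⟫ := by
    have hvw : v j = w + (1 - ‖w‖) • v j := by
      rw [← sub_eq_iff_eq_add', hv j, normalize_sub_self]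
    conv_lhs => rw [hvw]
    simp only [w, gramSchmidtResidual, Pi.add_apply, inner_add_right, inner_sub_right,
      inner_sum, inner_smul_right, hu.inner_eq_zero hji.ne']
    ring
  have hw : |1 - ‖w‖| ≤ ‖w - u j‖ := by
    simpa [hu.1 j, abs_sub_comm] using abs_norm_sub_norm_le w (u j)
  have hsummand : ∀ l ∈ Iio j,
      |⟪u j + δ j, v l⟫ * ⟪u i, v l⟫| ≤ (‖v l - u l‖ + ε) * ‖v l - u l‖ := fun l hl => by
      have hlj := mem_Iio.mp hl
      have hfirst := abs_inner_le_of_inner_eq_zero (hu.inner_eq_zero hlj.ne') (hu.1 j) (hv1 l)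
        (u j + δ j)
      rw [add_sub_cancel_left] at hfirst
      rw [abs_mul]
      exact mul_le_mul (by linarith [hδ j]) (hcoef l (hlj.trans hji).ne) (abs_nonneg _)
        (add_nonneg (norm_nonneg _) hε)
  rw [hdecomp]
  calc |(1 - ‖w‖) * ⟪u i, v j⟫ - ∑ l ∈ Iio j, ⟪u j + δ j, v l⟫ * ⟪u i, v l⟫|
      ≤ |1 - ‖w‖| * |⟪u i, v j⟫| + ∑ l ∈ Iio j, |⟪u j + δ j, v l⟫ * ⟪u i, v l⟫| := by
        grw [abs_sub, abs_mul, abs_sum_le_sum_abs]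
    _ ≤ _ := by
        grw [hw, hcoef j hji.ne, sum_le_sum hsummand]

theorem exists_norm_sum_inner_gramSchmidtNormed_add_sub_le_sq :
    ∃ C ≥ (0 : ℝ), ∀ (u δ : Fin k → E) (ε : ℝ), Orthonormal ℝ u → (∀ i, ‖δ i‖ ≤ ε) → ∀ i,
      let v := gramSchmidtNormed ℝ (u + δ)
      ‖∑ j ∈ Iio i, ⟪u i, v j⟫ • v j - ∑ j ∈ Iio i, ⟪u i, δ j⟫ • u j‖ ≤ C * ε ^ 2 := by
  set D : ℝ := 2 * (1 + k) * 3 ^ k + 1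
  set K : ℝ := (1 + k) * D
  refine ⟨k * (k + 2) * K ^ 2, by positivity, fun u δ ε hu hδ i => ?_⟩
  intro v
  have hε : 0 ≤ ε := (norm_nonneg _).trans (hδ i)
  have hv1 : ∀ l, ‖v l‖ ≤ 1 := norm_gramSchmidtNormed_le_one _
  have hD1 : 1 ≤ D := le_add_of_nonneg_left (by positivity)
  have hDK : D ≤ K := le_mul_of_one_le_left (by positivity) (by simp)
  have he : ∀ j, ‖v j - u j‖ + ε ≤ D * ε := fun j => by
    have h3 : (3 : ℝ) ^ (j : ℕ) ≤ 3 ^ k := pow_le_pow_right₀ (by norm_num) j.isLt.le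
    grw [norm_gramSchmidtNormed_add_sub_le hu hδ j, h3]
    exact le_of_eq (by ring)
  have he' : ∀ j, ‖v j - u j‖ ≤ K * ε := fun j => by nlinarith [he j]
  have hw : ∀ j, ‖gramSchmidtResidual (u + δ) v j - u j‖ ≤ K * ε := fun j => by
    grw [norm_gramSchmidtResidual_add_sub_le hu hδ hv1 j,
      Fin.sum_Iio_le_mul (by positivity) fun l _ => he l]
    nlinarith [mul_le_mul_of_nonneg_right hD1 hε]
  have hterm : ∀ j ∈ Iio i, ‖⟪u i, v j⟫ • v j - ⟪u i, δ j⟫ • u j‖ ≤ (k + 2) * (K * ε) ^ 2 :=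
    fun j hj => by
      have hji := mem_Iio.mp hj
      have hscalar := abs_inner_gramSchmidtNormed_add_sub_inner_le hu hδ hji
      dsimp only at hscalar
      grw [hw j, he' j, Fin.sum_Iio_le_mul (c := K * ε * (K * ε)) (by positivity)
        fun l _ => mul_le_mul ((he l).trans (by nlinarith)) (he' l) (norm_nonneg _)
          (by positivity)] at hscalar
      calc ‖⟪u i, v j⟫ • v j - ⟪u i, δ j⟫ • u j‖
          = ‖⟪u i, v j⟫ • (v j - u j) + (⟪u i, v j⟫ - ⟪u i, δ j⟫) • u j‖ := by
            rw [smul_sub, sub_smul]; abel_nf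
        _ ≤ ‖v j - u j‖ * ‖v j - u j‖ + |⟪u i, v j⟫ - ⟪u i, δ j⟫| := by
            grw [norm_add_le, norm_smul, norm_smul, hu.1 j, Real.norm_eq_abs, Real.norm_eq_abs,
              abs_inner_le_norm_sub hu (hv1 j) hji.ne', mul_one]
        _ ≤ (k + 2) * (K * ε) ^ 2 := by
            nlinarith [mul_self_le_mul_self (norm_nonneg _) (he' j)]
  calc _ = ‖∑ j ∈ Iio i, (⟪u i, v j⟫ • v j - ⟪u i, δ j⟫ • u j)‖ := by rw [sum_sub_distrib]
    _ ≤ k * ((k + 2) * (K * ε) ^ 2) := by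
        grw [norm_sum_le, Fin.sum_Iio_le_mul (by positivity) hterm]
    _ = k * (k + 2) * K ^ 2 * ε ^ 2 := by ring

end Perturbation

lemma one_add_norm_le_exp_of_norm_sub_le {E : Type*} [SeminormedAddCommGroup E] {x : ℕ → E}
    {a : ℝ} {N : ℕ} (h : ∀ n < N, ‖x (n + 1) - x n‖ ≤ a * (1 + ‖x n‖)) :
    ∀ n ≤ N, 1 + ‖x n‖ ≤ Real.exp (a * n) * (1 + ‖x 0‖) := by
  intro n hn
  induction n with
  | zero => simp
  | succ n ih =>
    have hstep := h n hn
    calc 1 + ‖x (n + 1)‖ ≤ (1 + a) * (1 + ‖x n‖) := by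
          linarith [norm_sub_norm_le (x (n + 1)) (x n)]
      _ ≤ Real.exp a * (Real.exp (a * n) * (1 + ‖x 0‖)) :=
          mul_le_mul (by linarith [Real.add_one_le_exp a]) (ih (by omega)) (by positivity)
            (Real.exp_pos a).le
      _ = Real.exp (a * ↑(n + 1)) * (1 + ‖x 0‖) := by
          rw [← mul_assoc, ← Real.exp_add]; push_cast; ring_nf

section Position

variable {E ι : Type*} [NormedAddCommGroup E] [InnerProductSpace ℝ E]

lemma norm_sub_two_smul_sum_inner_smul {v : ι → E} (hv : Orthonormal ℝ v) (s : Finset ι) (y : E) :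
    ‖y - (2 : ℝ) • ∑ j ∈ s, ⟪v j, y⟫ • v j‖ = ‖y‖ := by
  set p := ∑ j ∈ s, ⟪v j, y⟫ • v j
  have hp : ⟪p, p⟫ = ⟪y, p⟫ := by
    rw [hv.inner_sum, real_inner_comm, sum_inner]
    simp [real_inner_smul_left]
  rw [← sq_eq_sq₀ (norm_nonneg _) (norm_nonneg _), norm_sub_sq_real, norm_smul,
    real_inner_smul_right, mul_pow, ← real_inner_self_eq_norm_sq p, hp]
  norm_num
  ring

lemma norm_le_exp_of_hisd_step [Fintype ι] {F : E → E} {L β τ : ℝ} {N : ℕ} {x : ℕ → E}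
    {v : ℕ → ι → E} (hL : 0 ≤ L) (hτ : 0 ≤ τ) (hgrow : ∀ y, ‖F y‖ ≤ L * (1 + ‖y‖))
    (hv : ∀ n < N, Orthonormal ℝ (v n))
    (hx : ∀ n < N, x (n + 1) =
      x n + τ • (β • (F (x n) - (2 : ℝ) • ∑ j, ⟪v n j, F (x n)⟫ • v n j))) :
    ∀ n ≤ N, ‖x n‖ ≤ Real.exp (|β| * L * (τ * N)) * (1 + ‖x 0‖) := by
  have hstep : ∀ n < N, ‖x (n + 1) - x n‖ ≤ |β| * L * τ * (1 + ‖x n‖) := fun n hn => by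
    rw [hx n hn, add_sub_cancel_left, norm_smul, norm_smul, Real.norm_of_nonneg hτ,
      Real.norm_eq_abs, norm_sub_two_smul_sum_inner_smul (hv n hn)]
    exact le_of_le_of_eq (mul_le_mul_of_nonneg_left
      (mul_le_mul_of_nonneg_left (hgrow _) (abs_nonneg β)) hτ) (by ring)
  intro n hn
  calc ‖x n‖ ≤ 1 + ‖x n‖ := le_add_of_nonneg_left zero_le_one
    _ ≤ Real.exp (|β| * L * τ * n) * (1 + ‖x 0‖) :=
        one_add_norm_le_exp_of_norm_sub_le hstep n hn
    _ ≤ Real.exp (|β| * L * (τ * N)) * (1 + ‖x 0‖) := by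
        rw [mul_assoc (|β| * L)]
        gcongr

end Position

theorem hisd_stmt5_general
    (d k : ℕ)
    (F : EuclideanSpace ℝ (Fin d) → EuclideanSpace ℝ (Fin d))
    (J : EuclideanSpace ℝ (Fin d) → (EuclideanSpace ℝ (Fin d) →L[ℝ] EuclideanSpace ℝ (Fin d)))
    (L : ℝ) (hL : 0 < L)
    (hLip : ∀ x₁ x₂ : EuclideanSpace ℝ (Fin d), ‖J x₂ - J x₁‖ + ‖F x₂ - F x₁‖ ≤ L * ‖x₂ - x₁‖)
    (hgrow : ∀ x : EuclideanSpace ℝ (Fin d), ‖F x‖ ≤ L * (1 + ‖x‖))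
    (β γ : ℝ)
    (T : ℝ) (hT : 0 < T)
    (x₀ : EuclideanSpace ℝ (Fin d))
    (v₀ : Fin k → EuclideanSpace ℝ (Fin d))
    (hv₀ : ∀ i j : Fin k, ⟪v₀ i, v₀ j⟫ = if i = j then (1:ℝ) else 0) :
    ∃ τ₀ > (0:ℝ), ∃ Q > (0:ℝ), ∀ (N : ℕ) (τ : ℝ), 0 < N → τ = T / N → τ ≤ τ₀ →
      ∀ (x : ℕ → EuclideanSpace ℝ (Fin d)) (v : ℕ → Fin k → EuclideanSpace ℝ (Fin d)),
        x 0 = x₀ → v 0 = v₀ →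
        (∀ n < N, x (n+1) = x n + τ •
            (β • (F (x n) - (2:ℝ) • ∑ j, ⟪v n j, F (x n)⟫ • v n j))) →
        (∀ n < N, ∀ i : Fin k,
          let vt := v n i + (τ * γ) • J (x n) (v n i)
          let w := vt - ∑ j ∈ Finset.Iio i, ⟪vt, v (n+1) j⟫ • v (n+1) j
          w ≠ 0 ∧ v (n+1) i = ‖w‖⁻¹ • w) →
        ∀ n < N, ∀ i : Fin k,
          ‖(∑ j ∈ Finset.Iio i, ⟪v n i, v (n+1) j⟫ • v (n+1) j) -
            (τ * γ) • ∑ j ∈ Finset.Iio i, ⟪v n i, J (x n) (v n j)⟫ • v n j‖ ≤ Q * τ^2 := by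
  obtain ⟨C, hC0, hC⟩ :=
    exists_norm_sum_inner_gramSchmidtNormed_add_sub_le_sq (E := EuclideanSpace ℝ (Fin d)) (k := k)
  set R := Real.exp (|β| * L * T) * (1 + ‖x₀‖)
  set M := |γ| * (‖J x₀‖ + L * (R + ‖x₀‖))
  -- The estimate holds for every step size, so any `τ₀` works.
  refine ⟨1, one_pos, C * M ^ 2 + 1, by positivity,
    fun N τ hN hτ _ x v hx0 hv0 hx hv n hn i => ?_⟩
  have hτ0 : 0 < τ := hτ ▸ div_pos hT (Nat.cast_pos.mpr hN)
  have horth : ∀ m ≤ N, Orthonormal ℝ (v m) := by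
    rintro (_ | m) hm
    · exact hv0 ▸ orthonormal_iff_ite.mpr hv₀
    · exact orthonormal_of_forall_eq_normalize (hv m hm)
  have hxR : ‖x n‖ ≤ R := by
    have h := norm_le_exp_of_hisd_step hL.le hτ0.le hgrow (fun m hm => horth m hm.le) hx n hn.le
    rwa [hτ, div_mul_cancel₀ _ (by positivity), hx0] at h
  have hJ : ‖J (x n)‖ ≤ ‖J x₀‖ + L * (R + ‖x₀‖) := by
    have hsub : ‖x n - x₀‖ ≤ R + ‖x₀‖ := by linarith [norm_sub_le (x n) x₀]
    nlinarith [hLip x₀ (x n), norm_le_insert' (J (x n)) (J x₀), norm_nonneg (F (x n) - F x₀)]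
  have hδ : ∀ j, ‖(τ * γ) • J (x n) (v n j)‖ ≤ τ * M := fun j => by
    grw [norm_smul, ContinuousLinearMap.le_opNorm, (horth n hn.le).1 j, hJ, Real.norm_eq_abs,
      abs_mul, abs_of_pos hτ0, mul_one, mul_assoc]
  have hgs : v (n + 1) = gramSchmidtNormed ℝ (v n + fun j => (τ * γ) • J (x n) (v n j)) :=
    eq_gramSchmidtNormed_of_forall_eq_normalize fun j => (hv n hn j).2
  have key := hC (v n) _ (τ * M) (horth n hn.le) hδ i
  simp only [inner_smul_right, ← hgs] at key
  simp only [Finset.smul_sum, smul_smul]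
  calc _ ≤ C * (τ * M) ^ 2 := key
    _ ≤ (C * M ^ 2 + 1) * τ ^ 2 := by nlinarith [sq_nonneg τ]

theorem hisd_stmt5
    (d k : ℕ) (hd : 1 ≤ d) (hk : 1 ≤ k) (hkd : k ≤ d)
    (F : EuclideanSpace ℝ (Fin d) → EuclideanSpace ℝ (Fin d))
    (J : EuclideanSpace ℝ (Fin d) → (EuclideanSpace ℝ (Fin d) →L[ℝ] EuclideanSpace ℝ (Fin d)))
    (hJsymm : ∀ x u w, ⟪J x u, w⟫ = ⟪u, J x w⟫)
    (L : ℝ) (hL : 0 < L)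
    (hLip : ∀ x₁ x₂ : EuclideanSpace ℝ (Fin d), ‖J x₂ - J x₁‖ + ‖F x₂ - F x₁‖ ≤ L * ‖x₂ - x₁‖)
    (hgrow : ∀ x : EuclideanSpace ℝ (Fin d), ‖F x‖ ≤ L * (1 + ‖x‖))
    (β γ : ℝ) (hβ : 0 < β) (hγ : 0 < γ)
    (T : ℝ) (hT : 0 < T)
    (x₀ : EuclideanSpace ℝ (Fin d))
    (v₀ : Fin k → EuclideanSpace ℝ (Fin d))
    (hv₀ : ∀ i j : Fin k, ⟪v₀ i, v₀ j⟫ = if i = j then (1:ℝ) else 0) :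
    ∃ τ₀ > (0:ℝ), ∃ Q > (0:ℝ), ∀ (N : ℕ) (τ : ℝ), 0 < N → τ = T / N → τ ≤ τ₀ →
      ∀ (x : ℕ → EuclideanSpace ℝ (Fin d)) (v : ℕ → Fin k → EuclideanSpace ℝ (Fin d)),
        x 0 = x₀ → v 0 = v₀ →
        (∀ n < N, x (n+1) = x n + τ •
            (β • (F (x n) - (2:ℝ) • ∑ j, ⟪v n j, F (x n)⟫ • v n j))) →
        (∀ n < N, ∀ i : Fin k,
          let vt := v n i + (τ * γ) • J (x n) (v n i)
          let w := vt - ∑ j ∈ Finset.Iio i, ⟪vt, v (n+1) j⟫ • v (n+1) j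
          w ≠ 0 ∧ v (n+1) i = ‖w‖⁻¹ • w) →
        ∀ n < N, ∀ i : Fin k,
          ‖(∑ j ∈ Finset.Iio i, ⟪v n i, v (n+1) j⟫ • v (n+1) j) -
            (τ * γ) • ∑ j ∈ Finset.Iio i, ⟪v n i, J (x n) (v n j)⟫ • v n j‖ ≤ Q * τ^2 :=
  hisd_stmt5_general d k F J L hL hLip hgrow β γ T hT x₀ v₀ hv₀
end
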